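/- Two-variable 2×2 determinant identity (Proposition 1.7): for all x, q ∈ ℂ with |q| < 1, one has (∑_{n≥0} q^{n(n+1)}/(q;q)_{2n} · x^{2n}) · (∑_{n≥0} q^{n²}/(q;q)_{2n} · x^{2n}) − (∑_{n≥0} q^{(n+1)²}/(q;q)_{2n+1} · x^{2n+1}) · (∑_{n≥0} q^{n(n+1)}/(q;q)_{2n+1} · x^{2n+1}) = 1; that is, the 2×2 matrix with rows (∑_{n≥0} q^{n(n+1)}/(q;q)_{2n} x^{2n}, ∑_{n≥0} q^{(n+1)²}/(q;q)_{2n+1} x^{2n+1}) and (∑_{n≥0} q^{n(n+1)}/(q;q)_{2n+1} x^{2n+1}, ∑_{n≥0} q^{n²}/(q;q)_{2n} x^{2n}) has determinant 1. -/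

import Mathlib

/-!
By the Cauchy product, the determinant is a power series in `x` with constant term `1` whose
coefficient of `x ^ (2 * N + 2)` is the difference of
`∑_{s+t=N+1} q^(s(s+1)+t²) / ((q;q)_{2s} (q;q)_{2t})` and
`∑_{s+t=N} q^((s+1)²+t(t+1)) / ((q;q)_{2s+1} (q;q)_{2t+1})`.
Up to the factor `q ^ (N + 1) ^ 2`, this difference is the sum
`∑_{i+j=2N+2} q^(i choose 2) a^i b^j / ((q;q)_i (q;q)_j)` at `a = -q`, `b = q ^ (N + 1)`,
split according to the parity of `i`. By the q-binomial theorem that sum equals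
`∏_{l<2N+2} (b + a q^l) / (q;q)_{2N+2}`, which vanishes through its factor `l = N`.
-/

open scoped BigOperators

noncomputable section

/-- `(a; q)_n := ∏_{k=0}^{n-1} (1 - q^k a)`. -/
def qPochFin (q a : ℂ) (n : ℕ) : ℂ := ∏ k ∈ Finset.range n, (1 - q ^ k * a)

open Finset

lemma qPochFin_self_succ (q : ℂ) (n : ℕ) :
    qPochFin q q (n + 1) = qPochFin q q n * (1 - q ^ (n + 1)) := by
  rw [qPochFin, prod_range_succ, ← pow_succ, qPochFin]

lemma one_sub_norm_le_norm_one_sub_pow {q : ℂ} (hq : ‖q‖ ≤ 1) {n : ℕ} (hn : n ≠ 0) :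
    1 - ‖q‖ ≤ ‖1 - q ^ n‖ := by
  calc 1 - ‖q‖ ≤ 1 - ‖q‖ ^ n := by gcongr; exact pow_le_of_le_one (norm_nonneg q) hq hn
    _ = ‖(1 : ℂ)‖ - ‖q ^ n‖ := by rw [norm_one, norm_pow]
    _ ≤ ‖1 - q ^ n‖ := norm_sub_norm_le _ _

lemma one_sub_pow_ne_zero {q : ℂ} (hq : ‖q‖ < 1) {n : ℕ} (hn : n ≠ 0) : 1 - q ^ n ≠ 0 :=
  norm_pos_iff.1 <| (sub_pos.2 hq).trans_le (one_sub_norm_le_norm_one_sub_pow hq.le hn)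

lemma pow_one_sub_norm_le_norm_qPochFin {q : ℂ} (hq : ‖q‖ ≤ 1) (n : ℕ) :
    (1 - ‖q‖) ^ n ≤ ‖qPochFin q q n‖ := by
  induction n with
  | zero => simp [qPochFin]
  | succ n ih =>
    rw [qPochFin_self_succ, norm_mul, pow_succ]
    exact mul_le_mul ih (one_sub_norm_le_norm_one_sub_pow hq n.succ_ne_zero)
      (sub_nonneg.2 hq) (norm_nonneg _)

lemma qPochFin_ne_zero {q : ℂ} (hq : ‖q‖ < 1) (n : ℕ) : qPochFin q q n ≠ 0 :=
  norm_pos_iff.1 <| (pow_pos (sub_pos.2 hq) n).trans_le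
    (pow_one_sub_norm_le_norm_qPochFin hq.le n)

theorem Finset.Nat.sum_antidiagonal_two_mul_add_two {M : Type*} [AddCommMonoid M]
    (f : ℕ × ℕ → M) (n : ℕ) :
    ∑ p ∈ antidiagonal (2 * n + 2), f p =
      ∑ p ∈ antidiagonal (n + 1), f (2 * p.1, 2 * p.2) +
        ∑ p ∈ antidiagonal n, f (2 * p.1 + 1, 2 * p.2 + 1) := by
  induction n generalizing f with
  | zero => simp [Nat.sum_antidiagonal_succ]; abel
  | succ n ih =>
    rw [Nat.sum_antidiagonal_succ (f := fun p => f (2 * p.1, 2 * p.2)),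
      Nat.sum_antidiagonal_succ (f := fun p => f (2 * p.1 + 1, 2 * p.2 + 1)),
      show 2 * (n + 1) + 2 = 2 * n + 2 + 1 + 1 by ring, Nat.sum_antidiagonal_succ,
      Nat.sum_antidiagonal_succ, ih]
    simp only [mul_add, mul_one, mul_zero, zero_add, add_assoc, Nat.reduceAdd]
    abel

def qBinomialSum (q a b : ℂ) (M : ℕ) : ℂ :=
  ∑ p ∈ antidiagonal M,
    q ^ p.1.choose 2 * a ^ p.1 * b ^ p.2 / (qPochFin q q p.1 * qPochFin q q p.2)

lemma one_sub_pow_succ_mul_qBinomialSum_succ {q : ℂ} (hq : ‖q‖ < 1) (a b : ℂ) (M : ℕ) :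
    (1 - q ^ (M + 1)) * qBinomialSum q a b (M + 1) = (b + a * q ^ M) * qBinomialSum q a b M := by
  -- split `1 - q ^ (i + j)` as `(1 - q ^ j) + q ^ j (1 - q ^ i)`; each part lowers one index
  have hsplit : (1 - q ^ (M + 1)) * qBinomialSum q a b (M + 1) =
      ∑ p ∈ antidiagonal (M + 1), (1 - q ^ p.2) *
          (q ^ p.1.choose 2 * a ^ p.1 * b ^ p.2 / (qPochFin q q p.1 * qPochFin q q p.2)) +
        ∑ p ∈ antidiagonal (M + 1), q ^ p.2 * (1 - q ^ p.1) *
          (q ^ p.1.choose 2 * a ^ p.1 * b ^ p.2 / (qPochFin q q p.1 * qPochFin q q p.2)) := by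
    rw [qBinomialSum, mul_sum, ← sum_add_distrib]
    refine sum_congr rfl fun p hp => ?_
    rw [← (mem_antidiagonal.1 hp), pow_add]
    ring
  rw [hsplit, Nat.sum_antidiagonal_succ', Nat.sum_antidiagonal_succ, qBinomialSum, add_mul,
    mul_sum, mul_sum]
  simp only [pow_zero, sub_self, zero_mul, mul_zero, zero_add]
  congr 1 <;> refine sum_congr rfl fun p hp => ?_
  · have := one_sub_pow_ne_zero hq p.2.succ_ne_zero
    rw [qPochFin_self_succ]
    field_simp
    ring
  · have := one_sub_pow_ne_zero hq p.1.succ_ne_zero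
    rw [qPochFin_self_succ, Nat.choose_succ_succ', Nat.choose_one_right, ← mem_antidiagonal.1 hp]
    field_simp
    ring

theorem qPochFin_mul_qBinomialSum {q : ℂ} (hq : ‖q‖ < 1) (a b : ℂ) (M : ℕ) :
    qPochFin q q M * qBinomialSum q a b M = ∏ l ∈ range M, (b + a * q ^ l) := by
  induction M with
  | zero => simp [qBinomialSum, qPochFin]
  | succ M ih =>
    rw [qPochFin_self_succ, mul_assoc, one_sub_pow_succ_mul_qBinomialSum_succ hq, prod_range_succ,
      ← ih]
    ring

lemma qBinomialSum_neg_self_eq_zero {q : ℂ} (hq : ‖q‖ < 1) {N M : ℕ} (hNM : N < M) :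
    qBinomialSum q (-q) (q ^ (N + 1)) M = 0 := by
  have hprod : ∏ l ∈ range M, (q ^ (N + 1) + -q * q ^ l) = 0 :=
    prod_eq_zero (mem_range.2 hNM) (by ring)
  rw [← qPochFin_mul_qBinomialSum hq, mul_eq_zero] at hprod
  exact hprod.resolve_left (qPochFin_ne_zero hq M)

lemma qBinomialSum_term_even (q : ℂ) {N s t : ℕ} (h : s + t = N + 1) :
    q ^ (2 * s).choose 2 * (-q) ^ (2 * s) * (q ^ (N + 1)) ^ (2 * t) /
        (qPochFin q q (2 * s) * qPochFin q q (2 * t)) =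
      q ^ ((N + 1) ^ 2) * (q ^ (s * (s + 1)) / qPochFin q q (2 * s) *
        (q ^ (t ^ 2) / qPochFin q q (2 * t))) := by
  have hexp : (2 * s).choose 2 + 2 * s + (N + 1) * (2 * t) = (N + 1) ^ 2 + s * (s + 1) + t ^ 2 := by
    rw [← h]; qify; rw [Nat.cast_choose_two]; push_cast; ring
  rw [Even.neg_pow (even_two_mul s), ← pow_mul, ← pow_add, ← pow_add, hexp, pow_add, pow_add]
  ring

lemma qBinomialSum_term_odd (q : ℂ) {N s t : ℕ} (h : s + t = N) :
    q ^ (2 * s + 1).choose 2 * (-q) ^ (2 * s + 1) * (q ^ (N + 1)) ^ (2 * t + 1) /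
        (qPochFin q q (2 * s + 1) * qPochFin q q (2 * t + 1)) =
      -(q ^ ((N + 1) ^ 2) * (q ^ ((s + 1) ^ 2) / qPochFin q q (2 * s + 1) *
        (q ^ (t * (t + 1)) / qPochFin q q (2 * t + 1)))) := by
  have hexp : (2 * s + 1).choose 2 + (2 * s + 1) + (N + 1) * (2 * t + 1) =
      (N + 1) ^ 2 + (s + 1) ^ 2 + t * (t + 1) := by
    rw [← h]; qify; rw [Nat.cast_choose_two]; push_cast; ring
  rw [Odd.neg_pow (odd_two_mul_add_one s), ← pow_mul, mul_neg, neg_mul, ← pow_add, ← pow_add,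
    hexp, pow_add, pow_add]
  ring

lemma sum_antidiagonal_succ_even_eq_odd {q : ℂ} (hq : ‖q‖ < 1) (N : ℕ) :
    ∑ p ∈ antidiagonal (N + 1),
        q ^ (p.1 * (p.1 + 1)) / qPochFin q q (2 * p.1) * (q ^ (p.2 ^ 2) / qPochFin q q (2 * p.2)) =
      ∑ p ∈ antidiagonal N, q ^ ((p.1 + 1) ^ 2) / qPochFin q q (2 * p.1 + 1) *
        (q ^ (p.2 * (p.2 + 1)) / qPochFin q q (2 * p.2 + 1)) := by
  rcases eq_or_ne q 0 with rfl | hq0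
  · simp [qPochFin, Nat.sum_antidiagonal_succ]
  have h := qBinomialSum_neg_self_eq_zero hq (show N < 2 * N + 2 by omega)
  rw [qBinomialSum, Nat.sum_antidiagonal_two_mul_add_two,
    sum_congr rfl fun p hp => qBinomialSum_term_even q (mem_antidiagonal.1 hp),
    sum_congr rfl fun p hp => qBinomialSum_term_odd q (mem_antidiagonal.1 hp),
    sum_neg_distrib, ← mul_sum, ← mul_sum, ← sub_eq_add_neg, ← mul_sub, mul_eq_zero,
    sub_eq_zero] at h
  exact h.resolve_left (pow_ne_zero _ hq0)

lemma summable_pow_sq_mul_pow {r : ℝ} (hr0 : 0 ≤ r) (hr : r < 1) (y : ℝ) :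
    Summable fun n : ℕ => r ^ (n ^ 2) * y ^ n := by
  have hlim : Filter.Tendsto (fun n : ℕ => r ^ n * y) Filter.atTop (nhds 0) := by
    simpa using (tendsto_pow_atTop_nhds_zero_of_lt_one hr0 hr).mul_const y
  refine .of_norm_bounded_eventually_nat summable_geometric_two ?_
  filter_upwards [hlim.norm.eventually (ge_mem_nhds (by norm_num : ‖(0 : ℝ)‖ < 1 / 2))]
    with n hn
  rw [sq, pow_mul, ← mul_pow, norm_pow]
  exact pow_le_pow_left₀ (norm_nonneg _) hn n

lemma norm_div_qPochFin_mul_pow_le {q : ℂ} (hq : ‖q‖ < 1) (x : ℂ) (e m : ℕ) :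
    ‖q ^ e / qPochFin q q m * x ^ m‖ ≤ ‖q‖ ^ e * (‖x‖ / (1 - ‖q‖)) ^ m := by
  have hpos : 0 < (1 - ‖q‖) ^ m := pow_pos (sub_pos.2 hq) m
  rw [norm_mul, norm_div, norm_pow, norm_pow, div_pow, mul_div_assoc', div_mul_eq_mul_div]
  gcongr
  exact pow_one_sub_norm_le_norm_qPochFin hq.le m

lemma summable_norm_div_qPochFin_mul_pow {q : ℂ} (hq : ‖q‖ < 1) (x : ℂ) {e m : ℕ → ℕ}
    (he : ∀ n, n ^ 2 ≤ e n) (hm : ∀ n, m n ≤ 2 * n + 1) :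
    Summable fun n => ‖q ^ e n / qPochFin q q (m n) * x ^ m n‖ := by
  set y := ‖x‖ / (1 - ‖q‖) + 1
  have hy : 1 ≤ y := le_add_of_nonneg_left (div_nonneg (norm_nonneg x) (sub_pos.2 hq).le)
  refine .of_nonneg_of_le (fun _ => norm_nonneg _) (fun n => ?_)
    ((summable_pow_sq_mul_pow (norm_nonneg q) hq (y ^ 2)).mul_left y)
  calc ‖q ^ e n / qPochFin q q (m n) * x ^ m n‖
        ≤ ‖q‖ ^ e n * (‖x‖ / (1 - ‖q‖)) ^ m n := norm_div_qPochFin_mul_pow_le hq x _ _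
    _ ≤ ‖q‖ ^ (n ^ 2) * y ^ (2 * n + 1) := by
        refine mul_le_mul (pow_le_pow_of_le_one (norm_nonneg q) hq.le (he n)) ?_
          (by positivity) (by positivity)
        exact (pow_le_pow_left₀ (by positivity) (le_add_of_nonneg_right zero_le_one) _).trans
          (pow_le_pow_right₀ hy (hm n))
    _ = y * (‖q‖ ^ (n ^ 2) * (y ^ 2) ^ n) := by rw [← pow_mul, pow_succ]; ring

lemma sum_antidiagonal_succ_even_eq_odd_mul_pow {q : ℂ} (hq : ‖q‖ < 1) (x : ℂ) (N : ℕ) :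
    ∑ p ∈ antidiagonal (N + 1), q ^ (p.1 * (p.1 + 1)) / qPochFin q q (2 * p.1) * x ^ (2 * p.1) *
        (q ^ (p.2 ^ 2) / qPochFin q q (2 * p.2) * x ^ (2 * p.2)) =
      ∑ p ∈ antidiagonal N,
        q ^ ((p.1 + 1) ^ 2) / qPochFin q q (2 * p.1 + 1) * x ^ (2 * p.1 + 1) *
          (q ^ (p.2 * (p.2 + 1)) / qPochFin q q (2 * p.2 + 1) * x ^ (2 * p.2 + 1)) := by
  calc _ = (∑ p ∈ antidiagonal (N + 1), q ^ (p.1 * (p.1 + 1)) / qPochFin q q (2 * p.1) *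
          (q ^ (p.2 ^ 2) / qPochFin q q (2 * p.2))) * x ^ (2 * N + 2) := by
        rw [sum_mul]
        refine sum_congr rfl fun p hp => ?_
        have hN : 2 * N + 2 = 2 * p.1 + 2 * p.2 := by have := mem_antidiagonal.1 hp; omega
        rw [hN]
        ring
    _ = _ := by
        rw [sum_antidiagonal_succ_even_eq_odd hq, sum_mul]
        refine sum_congr rfl fun p hp => ?_
        rw [← mem_antidiagonal.1 hp]
        ring

/-- Two-variable 2×2 determinant identity (Proposition 1.7). -/
theorem two_variable_determinant (x q : ℂ) (hq : ‖q‖ < 1) :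
    (∑' n : ℕ, q ^ (n * (n + 1)) / qPochFin q q (2 * n) * x ^ (2 * n)) *
        (∑' n : ℕ, q ^ (n ^ 2) / qPochFin q q (2 * n) * x ^ (2 * n)) -
      (∑' n : ℕ, q ^ ((n + 1) ^ 2) / qPochFin q q (2 * n + 1) * x ^ (2 * n + 1)) *
        (∑' n : ℕ, q ^ (n * (n + 1)) / qPochFin q q (2 * n + 1) * x ^ (2 * n + 1)) = 1 := by
  have hA := summable_norm_div_qPochFin_mul_pow hq x (e := fun n => n * (n + 1))
    (m := fun n => 2 * n) (fun n => by nlinarith) (fun n => by omega)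
  have hC := summable_norm_div_qPochFin_mul_pow hq x (e := fun n => n ^ 2)
    (m := fun n => 2 * n) (fun n => le_rfl) (fun n => by omega)
  have hB := summable_norm_div_qPochFin_mul_pow hq x (e := fun n => (n + 1) ^ 2)
    (m := fun n => 2 * n + 1) (fun n => Nat.pow_le_pow_left n.le_succ 2) (fun n => le_rfl)
  have hD := summable_norm_div_qPochFin_mul_pow hq x (e := fun n => n * (n + 1))
    (m := fun n => 2 * n + 1) (fun n => by nlinarith) (fun n => le_rfl)
  rw [tsum_mul_tsum_eq_tsum_sum_antidiagonal_of_summable_norm hA hC,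
    tsum_mul_tsum_eq_tsum_sum_antidiagonal_of_summable_norm hB hD, tsum_eq_zero_add']
  · simp only [sum_antidiagonal_succ_even_eq_odd_mul_pow hq]
    simp [qPochFin]
  · simpa only [sum_antidiagonal_succ_even_eq_odd_mul_pow hq] using
      (summable_norm_sum_mul_antidiagonal_of_summable_norm hB hD).of_norm

end
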